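/- Let G=(U,W,E) be a connected P_7-free bipartite graph in which every two distinct vertices of U have a common neighbour and every two distinct vertices of W have a common neighbour (i.e., both neighbourhood graphs G_U and G_W are complete). Let x, y ∈ U be vertices maximizing |N(x) ∪ N(y)| over all pairs of vertices of U. Then N(x) ∪ N(y) = W. -/

import Mathlib

universe u

/-- `X` is complete to `Y` in `G`: every vertex of `X` is adjacent to every vertex of `Y`. -/
def CompleteTo {V : Type u} (G : SimpleGraph V) (X Y : Set V) : Prop :=
  ∀ ⦃x⦄, x ∈ X → ∀ ⦃y⦄, y ∈ Y → G.Adj x y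

/-- `X` is anticomplete to `Y` in `G`. -/
def AnticompleteTo {V : Type u} (G : SimpleGraph V) (X Y : Set V) : Prop :=
  ∀ ⦃x⦄, x ∈ X → ∀ ⦃y⦄, y ∈ Y → ¬ G.Adj x y

/-- `(U, W)` is a bipartition of the vertex set of `G` into two independent sets. -/
structure IsBipartition {V : Type u} (G : SimpleGraph V) (U W : Set V) : Prop where
  union_eq : U ∪ W = Set.univ
  disjoint : Disjoint U W
  cross : ∀ ⦃x y⦄, G.Adj x y → (x ∈ U ∧ y ∈ W) ∨ (x ∈ W ∧ y ∈ U)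

/-- `G` contains an induced subgraph isomorphic to `H`. -/
def HasInducedCopy {α : Type*} {V : Type u} (H : SimpleGraph α) (G : SimpleGraph V) : Prop :=
  ∃ f : α ↪ V, ∀ a b : α, G.Adj (f a) (f b) ↔ H.Adj a b

/-- `G` has no induced subgraph isomorphic to the chordless path `P_m` on `m` vertices. -/
def PathFree (m : ℕ) {V : Type u} (G : SimpleGraph V) : Prop :=
  ¬ HasInducedCopy (SimpleGraph.pathGraph m) G

/-- `G` is bipartite: its vertex set can be partitioned into (at most) two independent sets. -/
def Bipartite {V : Type u} (G : SimpleGraph V) : Prop :=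
  ∃ U W : Set V, IsBipartition G U W

/-- The bipartite complement of `G` with respect to the parts `U` and `W`:
`u ∈ U` and `w ∈ W` are adjacent iff they are non-adjacent in `G`. -/
def bipComplOn {V : Type u} (G : SimpleGraph V) (U W : Set V) : SimpleGraph V where
  Adj x y := ((x ∈ U ∧ y ∈ W) ∨ (x ∈ W ∧ y ∈ U)) ∧ x ≠ y ∧ ¬ G.Adj x y
  symm := by
    constructor
    rintro x y ⟨h1, h2, h3⟩
    exact ⟨by tauto, h2.symm, fun h => h3 h.symm⟩
  loopless := by constructor; rintro x ⟨_, h, _⟩; exact h rfl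

/-- The neighbourhood graph `G_C` of a part `C`: vertices are the elements of `C` and two
distinct vertices are adjacent iff they have a common neighbour in `G`. -/
def nbrGraph {V : Type u} (G : SimpleGraph V) (C : Set V) : SimpleGraph C where
  Adj x y := x ≠ y ∧ ∃ z : V, G.Adj x z ∧ G.Adj y z
  symm := by constructor; rintro x y ⟨h1, z, h2, h3⟩; exact ⟨h1.symm, z, h3, h2⟩
  loopless := by constructor; rintro x ⟨h, _⟩; exact h rfl

/-- A graph is complete if every two distinct vertices are adjacent. -/
def IsCompleteGraph {α : Type u} (H : SimpleGraph α) : Prop :=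
  ∀ x y : α, x ≠ y → H.Adj x y

/-! If some `w ∈ W` is missed by `N(x) ∪ N(y)`, then for every neighbour `c` of `w` the pair
`{c, y}` gains `w` over `{x, y}`, so by maximality it loses a private neighbour `m_x` of `x`;
symmetrically `{c, x}` loses a private neighbour `m_y` of `y`. As `G` is connected, `w` has a
neighbour, so private neighbours `w_x` of `x` and `w_y` of `y` exist. No neighbour `c` of `w` is
adjacent to both `w_x` and `w_y`: otherwise `m_x x w_x c w_y y m_y` is an induced `P₇`. Since `G_W`
is complete, `w` has a common neighbour `a` with `w_x` and `b` with `w_y`; then `a ≁ w_y` and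
`b ≁ w_x`, and `y w_y b w a w_x x` is an induced `P₇`. -/

namespace IsBipartition

variable {V : Type u} {G : SimpleGraph V} {U W : Set V}

theorem symm (h : IsBipartition G U W) : IsBipartition G W U where
  union_eq := by rw [Set.union_comm, h.union_eq]
  disjoint := h.disjoint.symm
  cross _ _ hab := (h.cross hab).symm

theorem mem_right_of_adj (h : IsBipartition G U W) {a b : V} (ha : a ∈ U) (hab : G.Adj a b) :
    b ∈ W :=
  (h.cross hab).elim And.right fun h' => absurd h'.1 (Set.disjoint_left.mp h.disjoint ha)

theorem not_adj_of_mem_left (h : IsBipartition G U W) {a b : V} (ha : a ∈ U) (hb : b ∈ U) :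
    ¬ G.Adj a b := fun hab => Set.disjoint_left.mp h.disjoint hb (h.mem_right_of_adj ha hab)

theorem ne_of_mem_left_of_mem_right (h : IsBipartition G U W) {a b : V} (ha : a ∈ U)
    (hb : b ∈ W) : a ≠ b := by
  rintro rfl
  exact Set.disjoint_left.mp h.disjoint ha hb

theorem exists_mem_adj_adj (h : IsBipartition G U W) (hGW : IsCompleteGraph (nbrGraph G W))
    {a b : V} (ha : a ∈ W) (hb : b ∈ W) (hab : a ≠ b) : ∃ c ∈ U, G.Adj c a ∧ G.Adj c b := by
  obtain ⟨-, c, hac, hbc⟩ := hGW ⟨a, ha⟩ ⟨b, hb⟩ (by simpa using hab)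
  exact ⟨c, h.symm.mem_right_of_adj ha hac, hac.symm, hbc.symm⟩

end IsBipartition

theorem hasInducedCopy_of_adj_iff {α V : Type*} {H : SimpleGraph α} {G : SimpleGraph V}
    (hH : ∀ a b, (∀ c, H.Adj a c ↔ H.Adj b c) → a = b) (f : α → V)
    (hf : ∀ a b, G.Adj (f a) (f b) ↔ H.Adj a b) : HasInducedCopy H G :=
  ⟨⟨f, fun a b hab => hH a b fun c => by rw [← hf, ← hf, hab]⟩, hf⟩

theorem pathGraph_seven_eq_of_adj_iff (a b : Fin 7)
    (h : ∀ c, (SimpleGraph.pathGraph 7).Adj a c ↔ (SimpleGraph.pathGraph 7).Adj b c) : a = b := by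
  simp only [SimpleGraph.pathGraph_adj] at h
  revert a b
  decide

theorem IsBipartition.hasInducedCopy_pathGraph_seven {V : Type u} {G : SimpleGraph V}
    {U W : Set V} (hbip : IsBipartition G U W) {v₀ v₁ v₂ v₃ v₄ v₅ v₆ : V}
    (h₀ : v₀ ∈ U) (h₁ : v₁ ∈ W) (h₂ : v₂ ∈ U) (h₃ : v₃ ∈ W) (h₄ : v₄ ∈ U) (h₅ : v₅ ∈ W)
    (h₆ : v₆ ∈ U)
    (e₀₁ : G.Adj v₀ v₁) (e₁₂ : G.Adj v₁ v₂) (e₂₃ : G.Adj v₂ v₃) (e₃₄ : G.Adj v₃ v₄)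
    (e₄₅ : G.Adj v₄ v₅) (e₅₆ : G.Adj v₅ v₆)
    (n₀₃ : ¬ G.Adj v₀ v₃) (n₀₅ : ¬ G.Adj v₀ v₅) (n₁₄ : ¬ G.Adj v₁ v₄) (n₁₆ : ¬ G.Adj v₁ v₆)
    (n₂₅ : ¬ G.Adj v₂ v₅) (n₃₆ : ¬ G.Adj v₃ v₆) :
    HasInducedCopy (SimpleGraph.pathGraph 7) G := by
  refine hasInducedCopy_of_adj_iff pathGraph_seven_eq_of_adj_iff ![v₀, v₁, v₂, v₃, v₄, v₅, v₆]
    fun i j => ?_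
  fin_cases i <;> fin_cases j <;>
    simp only [Fin.isValue, Fin.mk_one, Fin.reduceFinMk, Fin.zero_eta, Matrix.cons_val,
      Matrix.cons_val_one, Matrix.cons_val_zero, SimpleGraph.pathGraph_adj, Fin.coe_ofNat_eq_mod,
      Nat.reduceMod, Nat.reduceAdd, Nat.reduceEqDiff, or_false, false_or, or_self, iff_true,
      iff_false] <;>
    first
    | assumption
    | exact SimpleGraph.Adj.symm (by assumption)
    | exact fun h => (by assumption : ¬ _) h.symm
    | exact hbip.not_adj_of_mem_left (by assumption) (by assumption)
    | exact hbip.symm.not_adj_of_mem_left (by assumption) (by assumption)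

theorem Set.exists_mem_notMem_of_ncard_le {α : Type*} {s t : Set α} {a : α} (ht : t.Finite)
    (h : t.ncard ≤ s.ncard) (hat : a ∈ t) (has : a ∉ s) : ∃ b ∈ s, b ∉ t := by
  by_contra! hst
  have : s ⊂ t := Set.ssubset_iff_subset_ne.2 ⟨hst, fun h => has (h ▸ hat)⟩
  exact (Set.ncard_lt_ncard this ht).not_ge h

section MaximalPair

open SimpleGraph

variable {V : Type u} [Finite V] {G : SimpleGraph V} {x y : V}

theorem exists_adj_not_adj_not_adj_of_ncard_le {c w : V}
    (hc : (G.neighborSet c ∪ G.neighborSet y).ncard ≤ (G.neighborSet x ∪ G.neighborSet y).ncard)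
    (hcw : G.Adj c w) (hxw : ¬ G.Adj x w) (hyw : ¬ G.Adj y w) :
    ∃ m, G.Adj x m ∧ ¬ G.Adj c m ∧ ¬ G.Adj y m := by
  obtain ⟨m, hm, hm'⟩ := Set.exists_mem_notMem_of_ncard_le (Set.toFinite _) hc (Or.inl hcw)
    (by simp [hxw, hyw])
  simp only [Set.mem_union, mem_neighborSet, not_or] at hm hm'
  exact ⟨m, hm.resolve_right hm'.2, hm'⟩

theorem not_adj_of_adj_private_neighbors {U W : Set V} (hbip : IsBipartition G U W)
    (hP7 : PathFree 7 G) (hx : x ∈ U) (hy : y ∈ U) {c w wx wy : V} (hc : c ∈ U)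
    (hcy : (G.neighborSet c ∪ G.neighborSet y).ncard ≤ (G.neighborSet x ∪ G.neighborSet y).ncard)
    (hcx : (G.neighborSet c ∪ G.neighborSet x).ncard ≤ (G.neighborSet y ∪ G.neighborSet x).ncard)
    (hcw : G.Adj c w) (hxw : ¬ G.Adj x w) (hyw : ¬ G.Adj y w)
    (hxwx : G.Adj x wx) (hywx : ¬ G.Adj y wx) (hywy : G.Adj y wy) (hxwy : ¬ G.Adj x wy)
    (hcwx : G.Adj c wx) : ¬ G.Adj c wy := by
  intro hcwy
  obtain ⟨mx, hxmx, hcmx, hymx⟩ := exists_adj_not_adj_not_adj_of_ncard_le hcy hcw hxw hyw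
  obtain ⟨my, hymy, hcmy, hxmy⟩ := exists_adj_not_adj_not_adj_of_ncard_le hcx hcw hyw hxw
  have hW {a v : V} (ha : a ∈ U) (hav : G.Adj a v) : v ∈ W := hbip.mem_right_of_adj ha hav
  exact hP7 <| hbip.symm.hasInducedCopy_pathGraph_seven (hW hx hxmx) hx (hW hx hxwx) hc
    (hW hy hywy) hy (hW hy hymy) hxmx.symm hxwx hcwx.symm hcwy hywy.symm hymy
    (fun h => hcmx h.symm) (fun h => hymx h.symm) hxwy hxmy (fun h => hywx h.symm) hcmy

end MaximalPair

theorem max_neighborhood_union_eq_W_general {V : Type u} [Fintype V] (G : SimpleGraph V)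
    (U W : Set V) (hbip : IsBipartition G U W) (hP7 : PathFree 7 G)
    (hconn : G.Connected)
    (hGW : IsCompleteGraph (nbrGraph G W))
    (x y : V) (hx : x ∈ U) (hy : y ∈ U)
    (hmax : ∀ a ∈ U, ∀ b ∈ U,
      (G.neighborSet a ∪ G.neighborSet b).ncard ≤
        (G.neighborSet x ∪ G.neighborSet y).ncard) :
    G.neighborSet x ∪ G.neighborSet y = W := by
  have hmax' : ∀ a ∈ U, ∀ b ∈ U,
      (G.neighborSet a ∪ G.neighborSet b).ncard ≤ (G.neighborSet y ∪ G.neighborSet x).ncard := by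
    simpa only [Set.union_comm (G.neighborSet y)] using hmax
  refine Set.Subset.antisymm (Set.union_subset (fun _ => hbip.mem_right_of_adj hx)
    (fun _ => hbip.mem_right_of_adj hy)) fun w hwW => by_contra fun hw => ?_
  simp only [Set.mem_union, SimpleGraph.mem_neighborSet, not_or] at hw
  obtain ⟨hxw, hyw⟩ := hw
  have : Nontrivial V := nontrivial_of_ne x w (hbip.ne_of_mem_left_of_mem_right hx hwW)
  obtain ⟨u, hwu⟩ := hconn.preconnected.exists_adj_of_nontrivial w
  have hu : u ∈ U := hbip.symm.mem_right_of_adj hwW hwu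
  obtain ⟨wx, hxwx, -, hywx⟩ :=
    exists_adj_not_adj_not_adj_of_ncard_le (hmax u hu y hy) hwu.symm hxw hyw
  obtain ⟨wy, hywy, -, hxwy⟩ :=
    exists_adj_not_adj_not_adj_of_ncard_le (hmax' u hu x hx) hwu.symm hyw hxw
  have hwxW := hbip.mem_right_of_adj hx hxwx
  have hwyW := hbip.mem_right_of_adj hy hywy
  obtain ⟨a, ha, haw, hawx⟩ :=
    hbip.exists_mem_adj_adj hGW hwW hwxW (by rintro rfl; exact hxw hxwx)
  obtain ⟨b, hb, hbw, hbwy⟩ :=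
    hbip.exists_mem_adj_adj hGW hwW hwyW (by rintro rfl; exact hyw hywy)
  have hawy := not_adj_of_adj_private_neighbors hbip hP7 hx hy ha (hmax a ha y hy)
    (hmax' a ha x hx) haw hxw hyw hxwx hywx hywy hxwy hawx
  have hbwx := not_adj_of_adj_private_neighbors hbip hP7 hy hx hb (hmax' b hb x hx)
    (hmax b hb y hy) hbw hyw hxw hywy hxwy hxwx hywx hbwy
  exact hP7 <| hbip.hasInducedCopy_pathGraph_seven hy hwyW hb hwW ha hwxW hx hywy hbwy.symm hbw
    haw.symm hawx hxwx.symm hyw hywx (fun h => hawy h.symm) (fun h => hxwy h.symm) hbwx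
    fun h => hxw h.symm

/-- Let `G = (U, W, E)` be a connected `P₇`-free bipartite graph whose
two neighbourhood graphs `G_U` and `G_W` are complete, and let `x, y ∈ U` maximize
`|N(x) ∪ N(y)|` over all pairs of vertices of `U`.  Then `N(x) ∪ N(y) = W`. -/
theorem max_neighborhood_union_eq_W {V : Type u} [Fintype V] (G : SimpleGraph V)
    (U W : Set V) (hbip : IsBipartition G U W) (hP7 : PathFree 7 G)
    (hconn : G.Connected)
    (hGU : IsCompleteGraph (nbrGraph G U)) (hGW : IsCompleteGraph (nbrGraph G W))
    (x y : V) (hx : x ∈ U) (hy : y ∈ U)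
    (hmax : ∀ a ∈ U, ∀ b ∈ U,
      (G.neighborSet a ∪ G.neighborSet b).ncard ≤
        (G.neighborSet x ∪ G.neighborSet y).ncard) :
    G.neighborSet x ∪ G.neighborSet y = W :=
  max_neighborhood_union_eq_W_general G U W hbip hP7 hconn hGW x y hx hy hmax
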